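/- arXiv:2501.15834 — 3 statements merged into one kernel-verified Lean document; each statement's English description precedes it below -/
import Mathlib

section
/- (The strong core respects improvement.) Let H = (N, {≻_a}) be a housing market with strict partial order preferences, and let H' be a p-improvement of H for some agent p ∈ N (obtained from H by a sequence of (p,q)-improvements, each of which only raises the position of p in the partial order of some agent q while leaving all comparisons not involving p unchanged). Then for every allocation X in the strong core of H and every allocation X' in the strong core of H', it holds that X' ⪰_p X, i.e., X(p) ≻_p X'(p) does not hold. -/
/-- A housing market: each agent `a` has a strict partial order `pref a`
(`pref a b c` means agent `a` strictly prefers house `b` to house `c`). -/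
structure Market (N : Type) where
  pref : N → N → N → Prop
  irrefl : ∀ a b, ¬ pref a b b
  asymm : ∀ a b c, pref a b c → ¬ pref a c b
  trans : ∀ a b c d, pref a b c → pref a c d → pref a b d

namespace Market

variable {N : Type}

/-- `b` is acceptable to `a`: `b ⪰_a a`, i.e. not `a ≻_a b`. -/
def acceptable (H : Market N) (a b : N) : Prop := ¬ H.pref a a b

/-- Arcs of the underlying digraph `D^H`. -/
def E (H : Market N) : Set (N × N) := {e | H.acceptable e.1 e.2}

/-- Undominated arcs of `D^H`. -/
def undominated (H : Market N) : Set (N × N) :=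
  {e | e ∈ H.E ∧ ∀ b', H.acceptable e.1 b' → ¬ H.pref e.1 b' e.2}

/-- A full allocation, given as a function assigning each agent its house. -/
def IsAllocation (H : Market N) (X : N → N) : Prop :=
  Function.Bijective X ∧ ∀ a, H.acceptable a (X a)

/-- A cycle of length `k ≥ 1` with all arcs in the arc set `A`. -/
def IsCycleIn (A : Set (N × N)) (k : ℕ) (c : ZMod k → N) : Prop :=
  0 < k ∧ Function.Injective c ∧ ∀ i, (c i, c (i + 1)) ∈ A

/-- `E_{[⪰X]}`: arcs `(a,b)` with `b ⪰_a X(a)`. -/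
def weakImprove (H : Market N) (X : N → N) : Set (N × N) :=
  {e | e ∈ H.E ∧ ¬ H.pref e.1 (X e.1) e.2}

/-- `E_{[≻X]}`: arcs `(a,b)` with `b ≻_a X(a)`. -/
def strictImprove (H : Market N) (X : N → N) : Set (N × N) :=
  {e | e ∈ H.E ∧ H.pref e.1 e.2 (X e.1)}

/-- A (weakly) blocking cycle for `X`. -/
def Blocks (H : Market N) (X : N → N) (k : ℕ) (c : ZMod k → N) : Prop :=
  IsCycleIn H.E k c ∧
  (∀ i, ¬ H.pref (c i) (X (c i)) (c (i + 1))) ∧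
  (∃ i, H.pref (c i) (c (i + 1)) (X (c i)))

/-- The strong core: allocations admitting no blocking cycle. -/
def InStrongCore (H : Market N) (X : N → N) : Prop :=
  H.IsAllocation X ∧ ¬ ∃ k c, H.Blocks X k c

/-- A strictly blocking cycle for `X`. -/
def StrictBlocks (H : Market N) (X : N → N) (k : ℕ) (c : ZMod k → N) : Prop :=
  IsCycleIn H.E k c ∧ ∀ i, H.pref (c i) (c (i + 1)) (X (c i))

/-- The core: allocations admitting no strictly blocking cycle. -/
def InCore (H : Market N) (X : N → N) : Prop :=
  H.IsAllocation X ∧ ¬ ∃ k c, H.StrictBlocks X k c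

/-- An allocation of the submarket `H|_S`, given as a set of arcs among agents of `S`. -/
def IsAllocationOn (H : Market N) (S : Set N) (X : Set (N × N)) : Prop :=
  X ⊆ H.E ∧ (∀ e ∈ X, e.1 ∈ S ∧ e.2 ∈ S) ∧
  (∀ a ∈ S, ∃! b, (a, b) ∈ X) ∧ (∀ b ∈ S, ∃! a, (a, b) ∈ X)

/-- A blocking cycle for the arc set `X` within the submarket `H|_S`. -/
def BlocksOn (H : Market N) (S : Set N) (X : Set (N × N)) (k : ℕ) (c : ZMod k → N) : Prop :=
  IsCycleIn H.E k c ∧ (∀ i, c i ∈ S) ∧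
  (∀ i b, (c i, b) ∈ X → ¬ H.pref (c i) b (c (i + 1))) ∧
  (∃ i b, (c i, b) ∈ X ∧ H.pref (c i) (c (i + 1)) b)

/-- Membership in the strong core of the submarket `H|_S`. -/
def InStrongCoreOn (H : Market N) (S : Set N) (X : Set (N × N)) : Prop :=
  H.IsAllocationOn S X ∧ ¬ ∃ k c, H.BlocksOn S X k c

end Market

/-- The arcs of the allocation `X` whose tails lie in `S`. -/
def graphRestrict {N : Type} (X : N → N) (S : Set N) : Set (N × N) :=
  {e | e.1 ∈ S ∧ e.2 = X e.1}

/-- Reachability in the digraph given by arc set `A`. -/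
def reach {N : Type} (A : Set (N × N)) : N → N → Prop :=
  Relation.ReflTransGen (fun u v => (u, v) ∈ A)

/-- A strongly connected component of the digraph given by arc set `A`. -/
def IsSCC {N : Type} (A : Set (N × N)) (S : Set N) : Prop :=
  S.Nonempty ∧ (∀ u ∈ S, ∀ v ∈ S, reach A u v) ∧
  (∀ u ∈ S, ∀ v, reach A u v → reach A v u → v ∈ S)

/-- An absorbing set: a strongly connected component not left by any arc. -/
def IsAbsorbing {N : Type} (A : Set (N × N)) (S : Set N) : Prop :=
  IsSCC A S ∧ ∀ e ∈ A, e.1 ∈ S → e.2 ∈ S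

/-- `H'` is a `(p,q)`-improvement of `H` for some agent `q`. -/
def ImprovementStep {N : Type} (p : N) (H H' : Market N) : Prop :=
  ∃ q, (∀ a, a ≠ q → H.pref a = H'.pref a) ∧
    (∀ a, a ≠ p → (H.pref q p a → H'.pref q p a) ∧ (H'.pref q a p → H.pref q a p)) ∧
    (∀ a b, a ≠ p → b ≠ p → (H.pref q a b ↔ H'.pref q a b))

/-!
Suppose `X(p) ≻'_p X'(p)` and call an arc good if it weakly improves `X` in `H` and `X'` in `H'`.
Starting from `(p, X p)`, which strictly improves `X'` in `H'`, walk along good arcs, alternating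
between strict arcs `(a, X a)` (improving `X'` in `H'`) and `(a, X' a)` (improving `X` in `H`).
From `(a, X a)`, the `X`-cycle through `a` cannot consist of good arcs only, since it would close a
blocking cycle for `X'`; its first bad arc `(a', X a')` gives `X' a' ≻'_{a'} X a'`, which holds in
`H` too because the walk never meets `p`, not even as `X' a'` (else `(p, X p)` would close a
blocking cycle for `X'`). The other case is symmetric. By finiteness the walk revisits a strict arc,
whose head then reaches its tail along good arcs: a blocking cycle for `X` or for `X'`.
-/

open Relation Function

variable {N : Type}

lemma reach_mono {A B : Set (N × N)} (hAB : A ⊆ B) {u v : N} (h : reach A u v) : reach B u v :=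
  ReflTransGen.mono (fun _ _ hx => hAB hx) _ _ h

lemma exists_injOn_path_of_reach {A : Set (N × N)} {b a : N} (h : reach A b a) :
    ∃ n, ∃ v : ℕ → N, v 0 = b ∧ v n = a ∧ (∀ i < n, (v i, v (i + 1)) ∈ A) ∧
      Set.InjOn v (Set.Iic n) := by
  classical
  induction h with
  | refl => exact ⟨0, fun _ => b, rfl, rfl, by simp, fun i hi j hj _ => by simp_all⟩
  | @tail c d _ hcd ih =>
    obtain ⟨n, v, h0, hn, harc, hinj⟩ := ih
    by_cases hd : ∃ i ≤ n, v i = d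
    · obtain ⟨i, hi, rfl⟩ := hd
      exact ⟨i, v, h0, rfl, fun j hj => harc j (by omega), hinj.mono (Set.Iic_subset_Iic.2 hi)⟩
    push Not at hd
    refine ⟨n + 1, update v (n + 1) d, by simp [h0], by simp, fun i hi => ?_, ?_⟩
    · rcases Nat.lt_succ_iff_lt_or_eq.1 hi with hi | rfl
      · simpa [update_of_ne (by omega : i ≠ n + 1), update_of_ne (by omega : i + 1 ≠ n + 1)]
          using harc i hi
      · simpa [hn] using hcd
    · intro i hi j hj hij
      simp only [Set.mem_Iic, update_apply] at hi hj hij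
      split_ifs at hij with hi' hj' hj'
      · omega
      · exact absurd hij.symm (hd j (by omega))
      · exact absurd hij (hd i (by omega))
      · exact hinj (by simp; omega) (by simp; omega) hij

lemma exists_isCycleIn_of_reach {A : Set (N × N)} {a b : N} (hab : (a, b) ∈ A)
    (h : reach A b a) : ∃ k c, Market.IsCycleIn A k c ∧ c 0 = a ∧ c 1 = b := by
  obtain ⟨n, v, h0, hn, harc, hinj⟩ := exists_injOn_path_of_reach h
  refine ⟨n + 1, fun i => v (i - 1).val, ⟨n.succ_pos, fun i j hij => ?_, fun i => ?_⟩,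
    by simpa [ZMod.val_neg_one] using hn, by simpa using h0⟩
  · have hval := hinj (Nat.lt_succ_iff.1 (ZMod.val_lt (i - 1)))
      (Nat.lt_succ_iff.1 (ZMod.val_lt (j - 1))) hij
    exact sub_left_inj.1 (ZMod.val_injective _ hval)
  · obtain ⟨t, rfl⟩ : ∃ t, i = t + 1 := ⟨i - 1, (sub_add_cancel i 1).symm⟩
    simp only [add_sub_cancel_right]
    rw [ZMod.val_add, ZMod.val_one_eq_one_mod, Nat.add_mod_mod]
    rcases (Nat.lt_succ_iff.1 (ZMod.val_lt t)).lt_or_eq with ht | ht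
    · rw [Nat.mod_eq_of_lt (by omega)]
      exact harc _ ht
    · rw [ht, Nat.mod_self, hn, h0]
      exact hab

lemma exists_reach_not_mem_of_not_reach [Finite N] {A : Set (N × N)} {f : N → N}
    (hf : Injective f) {a : N} (h : ¬ reach A (f a) a) :
    ∃ a', reach A (f a) a' ∧ (a', f a') ∉ A := by
  by_contra! hclosed
  have hiter : ∀ m, reach A (f a) (f^[m] (f a)) := by
    intro m
    induction m with
    | zero => exact ReflTransGen.refl
    | succ m ih =>
      rw [iterate_succ_apply']
      exact ih.tail (hclosed _ ih)
  obtain ⟨m, hm, hper⟩ := mem_periodicPts.1 (hf.mem_periodicPts a)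
  have hback : f^[m - 1] (f a) = a := by
    rw [← iterate_succ_apply, Nat.succ_eq_add_one, Nat.sub_add_cancel hm]
    exact hper
  have hreach := hiter (m - 1)
  rw [hback] at hreach
  exact h hreach

lemma exists_rel_self_of_forall_exists_rel {α : Type*} [Finite α] {P : α → Prop}
    {r : α → α → Prop} (htrans : ∀ x y z, r x y → r y z → r x z) {x₀ : α} (h₀ : P x₀)
    (h : ∀ x, P x → ∃ y, P y ∧ r x y) : ∃ x, P x ∧ r x x := by
  by_contra! hirrefl
  let s : α → α → Prop := fun y x => P x ∧ r x y
  have : IsTrans α s := ⟨fun _ _ _ h₁ h₂ => ⟨h₂.1, htrans _ _ _ h₂.2 h₁.2⟩⟩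
  have : Std.Irrefl s := ⟨fun x hx => hirrefl x hx.1 hx.2⟩
  refine (Finite.wellFounded_of_trans_of_irrefl s).induction (C := fun x => ¬ P x) x₀
    (fun x ih hx => ?_) h₀
  obtain ⟨y, hy, hxy⟩ := h x hx
  exact ih y ⟨hx, hxy⟩ hy

namespace Market

variable {H H' : Market N} {X X' : N → N} {p : N}

lemma strictImprove_subset_weakImprove (H : Market N) (X : N → N) :
    H.strictImprove X ⊆ H.weakImprove X :=
  fun _ he => ⟨he.1, H.asymm _ _ _ he.2⟩

lemma IsAllocation.mem_weakImprove (hX : H.IsAllocation X) (a : N) :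
    (a, X a) ∈ H.weakImprove X :=
  ⟨hX.2 a, H.irrefl _ _⟩

lemma InStrongCore.not_reach_of_mem_strictImprove (hX : H.InStrongCore X) {a b : N}
    (hab : (a, b) ∈ H.strictImprove X) : ¬ reach (H.weakImprove X) b a := by
  intro h
  obtain ⟨k, c, ⟨hk, hinj, harc⟩, hc0, hc1⟩ :=
    exists_isCycleIn_of_reach (H.strictImprove_subset_weakImprove X hab) h
  refine hX.2 ⟨k, c, ⟨hk, hinj, fun i => (harc i).1⟩, fun i => (harc i).2, 0, ?_⟩
  rw [zero_add, hc0, hc1]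
  exact hab.2

lemma InStrongCore.ne_and_ne_of_reach (hX : H.InStrongCore X) {b : N}
    (hpb : (p, b) ∈ H.strictImprove X) {a : N} (ha : reach (H.weakImprove X) b a) :
    a ≠ p ∧ X a ≠ p := by
  refine ⟨?_, fun hXa => ?_⟩
  · rintro rfl
    exact hX.not_reach_of_mem_strictImprove hpb ha
  · exact hX.not_reach_of_mem_strictImprove hpb (ha.tail (hXa ▸ hX.1.mem_weakImprove a))

lemma exists_reach_not_mem_weakImprove [Finite N] {K K' : Market N} {Y Y' : N → N}
    (hY : K.IsAllocation Y) (hY' : K'.InStrongCore Y') {a : N}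
    (ha : (a, Y a) ∈ K'.strictImprove Y') :
    ∃ a', reach (K.weakImprove Y ∩ K'.weakImprove Y') (Y a) a' ∧
      (a', Y a') ∉ K'.weakImprove Y' := by
  obtain ⟨a', hreach, hnot⟩ := exists_reach_not_mem_of_not_reach hY.1.1
    (fun h => hY'.not_reach_of_mem_strictImprove ha (reach_mono Set.inter_subset_right h))
  exact ⟨a', hreach, fun h => hnot ⟨hY.mem_weakImprove a', h⟩⟩

/-- What a `p`-improvement preserves: `H'` agrees with `H` on comparisons not involving `p`,
and can only rank `p` higher. -/
structure RaisesOnly (p : N) (H H' : Market N) : Prop where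
  pref_of_pref' : ∀ a b c, b ≠ p → H'.pref a b c → H.pref a b c
  pref'_of_pref : ∀ a b c, c ≠ p → H.pref a b c → H'.pref a b c

namespace RaisesOnly

lemma of_improvementStep (h : ImprovementStep p H H') : RaisesOnly p H H' := by
  obtain ⟨q, hother, hp, hnp⟩ := h
  constructor
  · intro a b c hb h'
    rcases eq_or_ne a q with rfl | ha
    · rcases eq_or_ne c p with rfl | hc
      · exact (hp b hb).2 h'
      · exact (hnp b c hb hc).2 h'
    · rwa [hother a ha]
  · intro a b c hc h
    rcases eq_or_ne a q with rfl | ha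
    · rcases eq_or_ne b p with rfl | hb
      · exact (hp c hc).1 h
      · exact (hnp b c hb hc).1 h
    · rwa [← hother a ha]

lemma refl (p : N) (H : Market N) : RaisesOnly p H H :=
  ⟨fun _ _ _ _ h => h, fun _ _ _ _ h => h⟩

lemma trans {H₁ H₂ H₃ : Market N} (h₁ : RaisesOnly p H₁ H₂) (h₂ : RaisesOnly p H₂ H₃) :
    RaisesOnly p H₁ H₃ :=
  ⟨fun a b c hb h => h₁.1 a b c hb (h₂.1 a b c hb h),
    fun a b c hc h => h₂.2 a b c hc (h₁.2 a b c hc h)⟩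

lemma of_reflTransGen (h : ReflTransGen (ImprovementStep p) H H') : RaisesOnly p H H' := by
  induction h with
  | refl => exact refl p H
  | tail _ hstep ih => exact ih.trans (of_improvementStep hstep)

lemma acceptable_of_acceptable' (hR : RaisesOnly p H H') {a b : N} (hb : b ≠ p)
    (h : H'.acceptable a b) : H.acceptable a b :=
  fun h' => h (hR.pref'_of_pref a a b hb h')

lemma acceptable'_of_acceptable (hR : RaisesOnly p H H') {a b : N} (ha : a ≠ p)
    (h : H.acceptable a b) : H'.acceptable a b :=
  fun h' => h (hR.pref_of_pref' a a b ha h')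

lemma mem_strictImprove_of_not_mem_weakImprove' (hR : RaisesOnly p H H')
    (hX : H.IsAllocation X) (hX' : H'.IsAllocation X') {a : N} (ha : a ≠ p) (hXa : X' a ≠ p)
    (h : (a, X a) ∉ H'.weakImprove X') : (a, X' a) ∈ H.strictImprove X := by
  have hpref : H'.pref a (X' a) (X a) :=
    not_not.1 (not_and.1 h (hR.acceptable'_of_acceptable ha (hX.2 a)))
  exact ⟨hR.acceptable_of_acceptable' hXa (hX'.2 a), hR.pref_of_pref' _ _ _ hXa hpref⟩

lemma mem_strictImprove'_of_not_mem_weakImprove (hR : RaisesOnly p H H')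
    (hX : H.IsAllocation X) (hX' : H'.IsAllocation X') {a : N} (ha : a ≠ p) (hXa : X' a ≠ p)
    (h : (a, X' a) ∉ H.weakImprove X) : (a, X a) ∈ H'.strictImprove X' := by
  have hpref : H.pref a (X a) (X' a) :=
    not_not.1 (not_and.1 h (hR.acceptable_of_acceptable' hXa (hX'.2 a)))
  exact ⟨hR.acceptable'_of_acceptable ha (hX.2 a), hR.pref'_of_pref _ _ _ hXa hpref⟩

end RaisesOnly

theorem RaisesOnly.not_pref_of_inStrongCore [Finite N] (hR : RaisesOnly p H H')
    (hX : H.InStrongCore X) (hX' : H'.InStrongCore X') : ¬ H'.pref p (X p) (X' p) := by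
  intro hp
  set A := H.weakImprove X ∩ H'.weakImprove X'
  have hpX : (p, X p) ∈ H'.strictImprove X' :=
    ⟨fun h => hX'.1.2 p (H'.trans _ _ _ _ h hp), hp⟩
  have hmemX : ∀ a, (a, X a) ∈ H'.strictImprove X' → (a, X a) ∈ A :=
    fun a hs => ⟨hX.1.mem_weakImprove a, H'.strictImprove_subset_weakImprove X' hs⟩
  have hmemX' : ∀ a, (a, X' a) ∈ H.strictImprove X → (a, X' a) ∈ A :=
    fun a hs => ⟨H.strictImprove_subset_weakImprove X hs, hX'.1.mem_weakImprove a⟩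
  have havoid : ∀ a, reach A (X p) a → a ≠ p ∧ X' a ≠ p :=
    fun a ha => hX'.ne_and_ne_of_reach hpX (reach_mono Set.inter_subset_right ha)
  let T : N × N → Prop := fun ⟨a, b⟩ => reach A (X p) b ∧
    ((b = X a ∧ (a, b) ∈ H'.strictImprove X') ∨ (b = X' a ∧ (a, b) ∈ H.strictImprove X))
  let follows : N × N → N × N → Prop := fun e e' => e ∈ A ∧ reach A e.2 e'.1
  have hstep : ∀ e, T e → ∃ e', T e' ∧ follows e e' := by
    rintro ⟨a, b⟩ ⟨hb, ⟨rfl, hs⟩ | ⟨rfl, hs⟩⟩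
    · obtain ⟨a', hr, hn⟩ := exists_reach_not_mem_weakImprove hX.1 hX' hs
      obtain ⟨ha', hXa'⟩ := havoid a' (hb.trans hr)
      have hs' := hR.mem_strictImprove_of_not_mem_weakImprove' hX.1 hX'.1 ha' hXa' hn
      exact ⟨(a', X' a'), ⟨(hb.trans hr).tail (hmemX' a' hs'), Or.inr ⟨rfl, hs'⟩⟩,
        hmemX a hs, hr⟩
    · obtain ⟨a', hr, hn⟩ := exists_reach_not_mem_weakImprove hX'.1 hX hs
      rw [Set.inter_comm] at hr
      obtain ⟨ha', hXa'⟩ := havoid a' (hb.trans hr)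
      have hs' := hR.mem_strictImprove'_of_not_mem_weakImprove hX.1 hX'.1 ha' hXa' hn
      exact ⟨(a', X a'), ⟨(hb.trans hr).tail (hmemX a' hs'), Or.inl ⟨rfl, hs'⟩⟩,
        hmemX' a hs, hr⟩
  have htrans : ∀ e₁ e₂ e₃, follows e₁ e₂ → follows e₂ e₃ → follows e₁ e₃ :=
    fun _ _ _ h₁ h₂ => ⟨h₁.1, (h₁.2.tail h₂.1).trans h₂.2⟩
  obtain ⟨e, ⟨-, ⟨-, hs⟩ | ⟨-, hs⟩⟩, -, hcycle⟩ :=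
    exists_rel_self_of_forall_exists_rel htrans (x₀ := (p, X p))
      ⟨ReflTransGen.refl, Or.inl ⟨rfl, hpX⟩⟩ hstep
  · exact hX'.not_reach_of_mem_strictImprove hs (reach_mono Set.inter_subset_right hcycle)
  · exact hX.not_reach_of_mem_strictImprove hs (reach_mono Set.inter_subset_left hcycle)

end Market

theorem stmt6 {N : Type} [Fintype N] (H H' : Market N) (p : N)
    (hImp : Relation.ReflTransGen (ImprovementStep p) H H')
    (X X' : N → N) (hX : H.InStrongCore X) (hX' : H'.InStrongCore X') :
    ¬ H'.pref p (X p) (X' p) :=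
  (Market.RaisesOnly.of_reflTransGen hImp).not_pref_of_inStrongCore hX hX'
end

section
/- In a housing market H with strict partial order preferences, let U denote the set of undominated arcs of the underlying digraph D^H. If X is an allocation in the strong core of H and S is an absorbing set of the digraph (N, U), then X restricted to S, namely X ∩ (S × S), is an allocation in the submarket H|_S contained in U, and X ∖ (S × S) is an allocation in the strong core of H|_{N∖S}. -/
/-!
If an agent `a ∈ S` did not receive an undominated house, a `≻_a`-maximal house `g` among those
strictly better than `X a` would give an undominated arc `(a, g)`. Since `S` is absorbing, `g ∈ S`
and `g` reaches `a` along undominated arcs; closing this path with `(a, g)` gives a cycle on which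
every agent weakly improves on `X` (no house it may get under `X` dominates its arc) and `a`
strictly, contradicting the strong core. So `X` maps the finite set `S` into itself, hence
`X ⁻¹' S = S`, and restricting `X` to an `X`-invariant set `T` gives an allocation of `H|_T` that
no cycle inside `T` can block, since such a cycle would block `X`.
-/

section Walks

variable {α : Type*} {r : α → α → Prop} {a b : α}

theorem exists_walk_of_reflTransGen (h : Relation.ReflTransGen r a b) :
    ∃ n, ∃ f : ℕ → α, f 0 = a ∧ f n = b ∧ ∀ i < n, r (f i) (f (i + 1)) := by
  induction h with
  | refl => exact ⟨0, fun _ => a, rfl, rfl, by simp⟩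
  | @tail b c _ hbc ih =>
    obtain ⟨n, f, hf0, hfn, hf⟩ := ih
    refine ⟨n + 1, Function.update f (n + 1) c, by simp [hf0], by simp, fun i hi => ?_⟩
    rcases Nat.lt_succ_iff_lt_or_eq.1 hi with hi | rfl
    · rw [Function.update_of_ne (by omega), Function.update_of_ne (by omega)]
      exact hf i hi
    · simpa [hfn] using hbc

theorem exists_injOn_walk_of_reflTransGen (h : Relation.ReflTransGen r a b) :
    ∃ n, ∃ f : ℕ → α, f 0 = a ∧ f n = b ∧ (∀ i < n, r (f i) (f (i + 1))) ∧
      Set.InjOn f (Set.Iic n) := by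
  classical
  have hex := exists_walk_of_reflTransGen h
  obtain ⟨f, hf0, hfn, hf⟩ := Nat.find_spec hex
  refine ⟨_, f, hf0, hfn, hf, ?_⟩
  -- a repetition `f i = f j` with `i < j` could be cut out, giving a shorter walk
  have hne : ∀ i j, i < j → j ≤ Nat.find hex → f i ≠ f j := by
    intro i j hij hj hfij
    refine Nat.find_min hex (m := Nat.find hex - (j - i)) (by omega)
      ⟨fun m => f (if m ≤ i then m else m + (j - i)), by simp [hf0], ?_, fun m hm => ?_⟩
    · dsimp only
      split_ifs with hle
      · rwa [show Nat.find hex - (j - i) = i by omega, hfij, show j = Nat.find hex by omega]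
      · rwa [show Nat.find hex - (j - i) + (j - i) = Nat.find hex by omega]
    · dsimp only
      split_ifs with h1 h2 h2
      · exact hf m (by omega)
      · rw [show m = i by omega, hfij, show i + 1 + (j - i) = j + 1 by omega]
        exact hf j (by omega)
      · omega
      · rw [show m + 1 + (j - i) = m + (j - i) + 1 by omega]
        exact hf _ (by omega)
  intro i hi j hj hfij
  rcases lt_trichotomy i j with hij | rfl | hij
  · exact absurd hfij (hne i j hij hj)
  · rfl
  · exact absurd hfij.symm (hne j i hij hi)

end Walks

theorem Market.exists_isCycleIn_of_mem_of_reach {N : Type} {A : Set (N × N)} {a b : N}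
    (hab : (a, b) ∈ A) (hba : reach A b a) :
    ∃ k c, Market.IsCycleIn A k c ∧ ∃ i, c i = a ∧ c (i + 1) = b := by
  obtain ⟨n, f, hf0, hfn, hf, hinj⟩ := exists_injOn_walk_of_reflTransGen hba
  have hval : ∀ i : ZMod (n + 1), (i + 1).val = (i.val + 1) % (n + 1) := fun i => by
    rw [ZMod.val_add, ZMod.val_one_eq_one_mod, Nat.add_mod_mod]
  have hn : ((n : ZMod (n + 1)) + 1) = 0 := by exact_mod_cast ZMod.natCast_self (n + 1)
  refine ⟨n + 1, fun i => f i.val, ⟨n.succ_pos, ?_, fun i => ?_⟩, n, ?_, ?_⟩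
  · exact fun i j hij => ZMod.val_injective _
      (hinj (Nat.lt_succ_iff.1 (ZMod.val_lt i)) (Nat.lt_succ_iff.1 (ZMod.val_lt j)) hij)
  · dsimp only
    rw [hval]
    rcases (Nat.lt_succ_iff_lt_or_eq.1 (ZMod.val_lt i)) with hi | hi
    · rw [Nat.mod_eq_of_lt (by omega)]
      exact hf _ hi
    · rw [hi, Nat.mod_self, hfn, hf0]
      exact hab
  · simp [ZMod.val_natCast, hfn]
  · simp [hn, hf0]

theorem Set.Finite.preimage_eq_of_mapsTo {α : Type*} {f : α → α} {s : Set α}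
    (hs : s.Finite) (hf : Function.Injective f) (h : Set.MapsTo f s s) : f ⁻¹' s = s :=
  calc f ⁻¹' s = f ⁻¹' (f '' s) := by
        rw [((hs.injOn_iff_bijOn_of_mapsTo h).1 hf.injOn).image_eq]
    _ = s := Set.preimage_image_eq s hf

namespace Market

variable {N : Type} (H : Market N)

theorem exists_mem_undominated_pref [Finite N] {a x : N} (hx : H.acceptable a x)
    (hxU : (a, x) ∉ H.undominated) : ∃ g, (a, g) ∈ H.undominated ∧ H.pref a g x := by
  have hB : {b | H.acceptable a b ∧ H.pref a b x}.Nonempty := by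
    by_contra hB
    exact hxU ⟨hx, fun b hb hbx => hB ⟨b, hb, hbx⟩⟩
  have : IsTrans N (H.pref a) := ⟨H.trans a⟩
  have : Std.Irrefl (H.pref a) := ⟨H.irrefl a⟩
  obtain ⟨g, ⟨hg, hgx⟩, hmax⟩ := (Finite.wellFounded_of_trans_of_irrefl (H.pref a)).has_min _ hB
  exact ⟨g, ⟨hg, fun b hb hbg => hmax b ⟨hb, H.trans a b g x hbg hgx⟩ hbg⟩, hgx⟩

variable {H}

theorem InStrongCore.mem_undominated [Finite N] {X : N → N} (hX : H.InStrongCore X) {S : Set N}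
    (hS : IsAbsorbing H.undominated S) {a : N} (ha : a ∈ S) : (a, X a) ∈ H.undominated := by
  by_contra hXa
  obtain ⟨g, hgU, hgX⟩ := H.exists_mem_undominated_pref (hX.1.2 a) hXa
  obtain ⟨k, c, ⟨hk, hc, hcU⟩, i, hci, hci1⟩ :=
    exists_isCycleIn_of_mem_of_reach hgU (hS.1.2.1 g (hS.2 _ hgU ha) a ha)
  refine hX.2 ⟨k, c, ⟨hk, hc, fun j => (hcU j).1⟩, fun j => (hcU j).2 _ (hX.1.2 _), i, ?_⟩
  rwa [hci, hci1]

theorem IsAllocation.isAllocationOn_graphRestrict {X : N → N} (hX : H.IsAllocation X)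
    {T : Set N} (hT : X ⁻¹' T = T) : H.IsAllocationOn T (graphRestrict X T) := by
  refine ⟨?_, ?_, fun a ha => ⟨X a, ⟨ha, rfl⟩, fun b hb => hb.2⟩, fun b hb => ?_⟩
  · rintro ⟨a, b⟩ ⟨-, hb : b = X a⟩
    exact hb ▸ hX.2 a
  · rintro ⟨a, b⟩ ⟨ha, hb : b = X a⟩
    subst hb
    exact ⟨ha, show a ∈ X ⁻¹' T by rwa [hT]⟩
  · obtain ⟨a, rfl⟩ := hX.1.2 b
    exact ⟨a, ⟨show a ∈ T by rwa [← hT], rfl⟩, fun a' ha' => hX.1.1 ha'.2.symm⟩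

theorem InStrongCore.inStrongCoreOn_graphRestrict {X : N → N} (hX : H.InStrongCore X)
    {T : Set N} (hT : X ⁻¹' T = T) : H.InStrongCoreOn T (graphRestrict X T) := by
  refine ⟨hX.1.isAllocationOn_graphRestrict hT, ?_⟩
  rintro ⟨k, c, hc, hcT, hweak, i, b, ⟨-, hb : b = X (c i)⟩, hstrict⟩
  subst hb
  exact hX.2 ⟨k, c, hc, fun j => hweak j _ ⟨hcT j, rfl⟩, i, hstrict⟩

end Market

theorem stmt8 {N : Type} [Fintype N] (H : Market N) (X : N → N)
    (hX : H.InStrongCore X) (S : Set N)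
    (hS : IsAbsorbing H.undominated S) :
    (H.IsAllocationOn S (graphRestrict X S) ∧ graphRestrict X S ⊆ H.undominated) ∧
    H.InStrongCoreOn Sᶜ (graphRestrict X Sᶜ) := by
  have hU : ∀ a ∈ S, (a, X a) ∈ H.undominated := fun a ha => hX.mem_undominated hS ha
  have hS_inv : X ⁻¹' S = S := (Set.toFinite S).preimage_eq_of_mapsTo hX.1.1.1
    fun a ha => hS.2 _ (hU a ha) ha
  refine ⟨⟨hX.1.isAllocationOn_graphRestrict hS_inv, ?_⟩,
    hX.inStrongCoreOn_graphRestrict (by rw [Set.preimage_compl, hS_inv])⟩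
  rintro ⟨a, b⟩ ⟨ha, hb : b = X a⟩
  exact hb ▸ hU a ha
end

section
/- There exists a housing market H with strict partial order preferences over five agents {a,b,c,d₁,d₂} whose strong core contains exactly two allocations: {(a,b),(b,c),(c,a),(d₁,d₂),(d₂,d₁)} and {(a,c),(c,b),(b,a),(d₁,d₂),(d₂,d₁)}. -/
/-!
Each target allocation gives every agent an undominated house, so no cycle can offer anyone a
strict improvement. Conversely, a cycle of undominated arcs never makes anybody worse off, so under
a strong-core allocation nobody on such a cycle strictly prefers the next house. Applied to the
cycles `(d₁ d₂)` and `(a b c)` this forces `X d₂ = d₁`, `X a ≠ a`, `X b ∉ {b, d₂}` and `X c ≠ c`;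
then house `d₂` can only go to `d₁`, and `a, b, c` are deranged among themselves.
-/

namespace Market

variable {N : Type} {H : Market N} {X : N → N} {k : ℕ} {c : ZMod k → N}

theorem blocks_of_isCycleIn_undominated (hX : H.IsAllocation X)
    (hc : IsCycleIn H.undominated k c) (hstrict : ∃ i, H.pref (c i) (c (i + 1)) (X (c i))) :
    H.Blocks X k c :=
  ⟨⟨hc.1, hc.2.1, fun i => (hc.2.2 i).1⟩, fun i => (hc.2.2 i).2 _ (hX.2 (c i)), hstrict⟩

theorem InStrongCore.not_pref_of_isCycleIn_undominated (hX : H.InStrongCore X)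
    (hc : IsCycleIn H.undominated k c) (i : ZMod k) :
    ¬ H.pref (c i) (c (i + 1)) (X (c i)) :=
  fun hi => hX.2 ⟨k, c, blocks_of_isCycleIn_undominated hX.1 hc ⟨i, hi⟩⟩

theorem inStrongCore_of_forall_mem_undominated (hX : H.IsAllocation X)
    (hund : ∀ a, (a, X a) ∈ H.undominated) : H.InStrongCore X :=
  ⟨hX, fun ⟨_, c, hc, _, i, hi⟩ => (hund (c i)).2 _ (hc.2.2 i) hi⟩

end Market

/-- The agents `a, b, c, d₁, d₂` are `0, 1, 2, 3, 4`; agent `x` accepts `acceptableHouses x`. -/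
def acceptableHouses : Fin 5 → Finset (Fin 5) :=
  ![{0, 1, 2, 3}, {0, 1, 2, 4}, {0, 1, 2}, {2, 3, 4}, {3, 4}]

/-- `y ≻_x z`: acceptable houses beat unacceptable ones and the own house, and `c ≻_a d₁`,
`c ≻_b d₂`. -/
def examplePref (x y z : Fin 5) : Prop :=
  y ∈ acceptableHouses x ∧ (z ∉ acceptableHouses x ∨ y ≠ x ∧ z = x) ∨
    x = 0 ∧ y = 2 ∧ z = 3 ∨ x = 1 ∧ y = 2 ∧ z = 4

instance (x y z : Fin 5) : Decidable (examplePref x y z) := by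
  unfold examplePref; infer_instance

def exampleMarket : Market (Fin 5) where
  pref := examplePref
  irrefl := by decide
  asymm := by decide
  trans := by decide

instance (x y z : Fin 5) : Decidable (exampleMarket.pref x y z) :=
  inferInstanceAs (Decidable (examplePref x y z))

instance (a b : Fin 5) : Decidable (exampleMarket.acceptable a b) :=
  inferInstanceAs (Decidable ¬ examplePref a a b)

instance (e : Fin 5 × Fin 5) : Decidable (e ∈ exampleMarket.undominated) := by
  unfold Market.undominated Market.E Market.acceptable; infer_instance

-- Eta-expanded so that `decide` sees the domain `ZMod k`, not the `Fin k` of `![...]`.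
theorem isCycleIn_undominated_d₁d₂ : Market.IsCycleIn exampleMarket.undominated 2
    (fun i : ZMod 2 => ![3, 4] i) :=
  ⟨by decide, by decide, by decide⟩

theorem isCycleIn_undominated_abc : Market.IsCycleIn exampleMarket.undominated 3
    (fun i : ZMod 3 => ![0, 1, 2] i) :=
  ⟨by decide, by decide, by decide⟩

theorem eq_or_eq_of_inStrongCore {X : Fin 5 → Fin 5} (hX : exampleMarket.InStrongCore X) :
    X = ![1, 2, 0, 4, 3] ∨ X = ![2, 0, 1, 4, 3] := by
  have hinj := hX.1.1.1
  have hacc := hX.1.2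
  have hd₁d₂ := hX.not_pref_of_isCycleIn_undominated isCycleIn_undominated_d₁d₂
  have habc := hX.not_pref_of_isCycleIn_undominated isCycleIn_undominated_abc
  have ha := (by decide : ∀ y, exampleMarket.acceptable 0 y → ¬ exampleMarket.pref 0 1 y →
    y = 1 ∨ y = 2 ∨ y = 3) _ (hacc 0) (habc 0)
  have hb := (by decide : ∀ y, exampleMarket.acceptable 1 y → ¬ exampleMarket.pref 1 2 y →
    y = 0 ∨ y = 2) _ (hacc 1) (habc 1)
  have hc := (by decide : ∀ y, exampleMarket.acceptable 2 y → ¬ exampleMarket.pref 2 0 y →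
    y = 0 ∨ y = 1) _ (hacc 2) (habc 2)
  have hd₁ := (by decide : ∀ y, exampleMarket.acceptable 3 y → y = 2 ∨ y = 3 ∨ y = 4) _ (hacc 3)
  have hd₂ := (by decide : ∀ y, exampleMarket.acceptable 4 y → ¬ exampleMarket.pref 4 3 y →
    y = 3) _ (hacc 4) (hd₁d₂ 1)
  suffices X 0 = 1 ∧ X 1 = 2 ∧ X 2 = 0 ∧ X 3 = 4 ∨ X 0 = 2 ∧ X 1 = 0 ∧ X 2 = 1 ∧ X 3 = 4 by
    rcases this with h | h <;> [left; right] <;> funext i <;> fin_cases i <;> simp [h, hd₂]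
  grind [Function.Injective]

theorem stmt16 : ∃ H : Market (Fin 5),
    ∀ X : Fin 5 → Fin 5,
      H.InStrongCore X ↔ (X = ![1, 2, 0, 4, 3] ∨ X = ![2, 0, 1, 4, 3]) := by
  refine ⟨exampleMarket, fun X => ⟨eq_or_eq_of_inStrongCore, ?_⟩⟩
  rintro (rfl | rfl) <;>
    exact Market.inStrongCore_of_forall_mem_undominated ⟨by decide, by decide⟩ (by decide)
end
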